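/- arXiv:2601.14231 — 6 statements merged into one kernel-verified Lean document; each statement's English description precedes it below -/
import Mathlib

section
/- Let k ≥ 1 be a natural number and let Y be a metric space containing no line, i.e., there is no map γ : ℝ → Y with dist(γ s, γ t) = |s − t| for all real s, t. Let X be the ℓ²-product of EuclideanSpace ℝ (Fin k) and Y, i.e., the product space with distance dist((v,y),(w,z)) = sqrt(dist(v,w)² + dist(y,z)²). Then every surjective isometry φ : X → X splits as a product: there exist a surjective isometry g of EuclideanSpace ℝ (Fin k) and a surjective isometry h of Y such that φ(v,y) = (g v, h y) for all v and y. In particular the isometry group of X embeds into Iso(ℝ^k) × Iso(Y). -/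
/-!
In an `ℓ²`-product `A × B`, equality in the triangle inequality forces the two projections of
the segments to be proportional. Hence along a line of the product the projection to `B` is a
line rescaled by a constant `c ≥ 0`, and `c = 0` when `B` contains no line. Every point of a
horizontal fibre `E × {y}` lies on a line inside that fibre, so an isometry `φ` of `E × Y` and its
inverse map horizontal fibres into horizontal fibres. This yields mutually inverse `1`-Lipschitz,
hence isometric, maps `h, h'` of `Y`, and then Pythagoras shows that the first component of `φ`
depends only on the first coordinate.
-/

open WithLp

theorem eq_mul_sub_of_mul_sub_eq {f : ℝ → ℝ → ℝ}
    (hf : ∀ s t u, s < t → t < u → f s t * (u - t) = f t u * (t - s)) {s t : ℝ} (hst : s < t) :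
    f s t = f 0 1 * (t - s) := by
  -- compare both intervals with `[m, m + 1]` to the right of them
  have through : ∀ s t m, s < t → t < m → f s t = f m (m + 1) * (t - s) := by
    intro s t m hst htm
    have h₁ := hf s t m hst htm
    have h₂ := hf t m (m + 1) htm (lt_add_one m)
    have hmt : m - t ≠ 0 := sub_ne_zero.2 htm.ne'
    apply mul_right_cancel₀ hmt
    linear_combination h₁ + (t - s) * h₂
  set m := max t 1 + 1
  rw [through s t m hst (by grind), through 0 1 m one_pos (by grind)]
  ring

section ProdL2

variable {A B : Type*} [PseudoMetricSpace A] [PseudoMetricSpace B]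

theorem WithLp.prod_dist_sq (x y : WithLp 2 (A × B)) :
    dist x y ^ 2 = dist x.fst y.fst ^ 2 + dist x.snd y.snd ^ 2 := by
  rw [prod_dist_eq_add (by norm_num), ← Real.rpow_natCast _ 2, ← Real.rpow_mul (by positivity)]
  norm_num

theorem WithLp.isometry_toLp_prod_const (b : B) : Isometry fun a : A => toLp 2 (a, b) :=
  Isometry.of_dist_eq fun a a' => by
    have h := prod_dist_sq (toLp 2 (a, b)) (toLp 2 (a', b))
    rw [toLp_snd, toLp_snd, dist_self, toLp_fst, toLp_fst] at h
    exact (sq_eq_sq₀ dist_nonneg dist_nonneg).1 (by simpa using h)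

theorem WithLp.dist_snd_mul_eq_of_dist_eq_add {x y z : WithLp 2 (A × B)}
    (h : dist x z = dist x y + dist y z) :
    dist x.snd y.snd * dist y z = dist y.snd z.snd * dist x y := by
  -- the vectors of side lengths `(d(xᵢ, yᵢ))ᵢ` and `(d(yᵢ, zᵢ))ᵢ` attain equality in Cauchy–Schwarz
  have hxy := prod_dist_sq x y
  have hyz := prod_dist_sq y z
  have hxz := prod_dist_sq x z
  have tri₁ := dist_triangle x.fst y.fst z.fst
  have tri₂ := dist_triangle x.snd y.snd z.snd
  have h₀ : dist x y * dist y z ≤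
      dist x.fst y.fst * dist y.fst z.fst + dist x.snd y.snd * dist y.snd z.snd := by
    rw [h] at hxz
    nlinarith [dist_nonneg (x := x.fst) (y := z.fst), dist_nonneg (x := x.snd) (y := z.snd)]
  nlinarith [sq_nonneg (dist x.fst y.fst * dist y z - dist y.fst z.fst * dist x y),
    sq_nonneg (dist x.snd y.snd * dist y z - dist y.snd z.snd * dist x y),
    mul_nonneg (dist_nonneg (x := x) (y := y)) (dist_nonneg (x := y) (y := z))]

theorem Isometry.dist_fst_sq_add_dist_sq_of_snd_eq {φ : WithLp 2 (A × B) → WithLp 2 (A × B)}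
    (hφ : Isometry φ) {h : B → B} (hφh : ∀ x, (φ x).snd = h x.snd) (x y : WithLp 2 (A × B)) :
    dist (φ x).fst (φ y).fst ^ 2 + dist (h x.snd) (h y.snd) ^ 2 =
      dist x.fst y.fst ^ 2 + dist x.snd y.snd ^ 2 := by
  rw [← hφh, ← hφh, ← prod_dist_sq, ← prod_dist_sq, hφ.dist_eq]

theorem Isometry.dist_le_of_snd_eq [Nonempty A] {φ : WithLp 2 (A × B) → WithLp 2 (A × B)}
    (hφ : Isometry φ) {h : B → B} (hφh : ∀ x, (φ x).snd = h x.snd) (b b' : B) :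
    dist (h b) (h b') ≤ dist b b' := by
  obtain ⟨a⟩ := ‹Nonempty A›
  have := hφ.dist_fst_sq_add_dist_sq_of_snd_eq hφh (toLp 2 (a, b)) (toLp 2 (a, b'))
  simp only [toLp_fst, toLp_snd, dist_self] at this
  rw [← pow_le_pow_iff_left₀ dist_nonneg dist_nonneg two_ne_zero]
  nlinarith [sq_nonneg (dist (φ (toLp 2 (a, b))).fst (φ (toLp 2 (a, b'))).fst)]

end ProdL2

section Line

variable {A B : Type*} [PseudoMetricSpace A]

theorem Isometry.exists_dist_snd_eq_mul [PseudoMetricSpace B] {γ : ℝ → WithLp 2 (A × B)}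
    (hγ : Isometry γ) : ∃ c, ∀ s t, dist (γ s).snd (γ t).snd = c * dist s t := by
  have dist_of_lt : ∀ {s t : ℝ}, s < t → dist s t = t - s := fun h => by
    rw [dist_comm, Real.dist_eq, abs_of_pos (sub_pos.2 h)]
  have collinear : ∀ s t u, s < t → t < u →
      dist (γ s).snd (γ t).snd * (u - t) = dist (γ t).snd (γ u).snd * (t - s) := by
    intro s t u hst htu
    simpa only [hγ.dist_eq, dist_of_lt hst, dist_of_lt htu] using
      dist_snd_mul_eq_of_dist_eq_add (x := γ s) (y := γ t) (z := γ u) (by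
        simp only [hγ.dist_eq, dist_of_lt hst, dist_of_lt htu, dist_of_lt (hst.trans htu)]; ring)
  refine ⟨dist (γ 0).snd (γ 1).snd, fun s t => ?_⟩
  rcases lt_trichotomy s t with h | rfl | h
  · rw [eq_mul_sub_of_mul_sub_eq collinear h, dist_of_lt h]
  · simp
  · rw [dist_comm, eq_mul_sub_of_mul_sub_eq collinear h, dist_comm s, dist_of_lt h]

theorem Isometry.snd_eq_of_no_line [MetricSpace B] (hB : ¬ ∃ γ : ℝ → B, Isometry γ)
    {γ : ℝ → WithLp 2 (A × B)} (hγ : Isometry γ) (s t : ℝ) : (γ s).snd = (γ t).snd := by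
  obtain ⟨c, hc⟩ := hγ.exists_dist_snd_eq_mul
  have hc₀ : 0 ≤ c := by simpa [Real.dist_eq] using (hc 0 1).symm.trans_ge dist_nonneg
  obtain rfl : c = 0 := by
    by_contra hne
    have hpos : 0 < c := hc₀.lt_of_ne' hne
    exact hB ⟨fun r => (γ (r / c)).snd, Isometry.of_dist_eq fun r r' => by
      rw [hc, Real.dist_eq, Real.dist_eq, ← sub_div, abs_div, abs_of_pos hpos,
        mul_div_cancel₀ _ hpos.ne']⟩
  rw [← dist_eq_zero, hc, zero_mul]

end Line

theorem exists_isometry_real_map_zero_norm {E : Type*} [NormedAddCommGroup E] [NormedSpace ℝ E]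
    {v : E} (hv : v ≠ 0) : ∃ γ : ℝ → E, Isometry γ ∧ γ 0 = 0 ∧ γ ‖v‖ = v :=
  ⟨fun s => s • (‖v‖⁻¹ : ℝ) • v,
    (LinearIsometry.toSpanSingleton ℝ E (norm_smul_inv_norm hv)).isometry, zero_smul ℝ _,
    by simp [smul_smul, norm_ne_zero_iff.2 hv]⟩

theorem exists_snd_eq_of_no_line {E Y : Type*} [NormedAddCommGroup E] [NormedSpace ℝ E]
    [MetricSpace Y] (hY : ¬ ∃ γ : ℝ → Y, Isometry γ) {φ : WithLp 2 (E × Y) → WithLp 2 (E × Y)}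
    (hφ : Isometry φ) : ∃ h : Y → Y, ∀ x, (φ x).snd = h x.snd := by
  refine ⟨fun y => (φ (toLp 2 (0, y))).snd, fun x => ?_⟩
  change (φ (toLp 2 (x.fst, x.snd))).snd = _
  obtain hx | hx := eq_or_ne x.fst 0
  · rw [hx]
  · obtain ⟨γ, hγ, hγ₀, hγv⟩ := exists_isometry_real_map_zero_norm hx
    simpa only [Function.comp_apply, hγ₀, hγv] using
      (hφ.comp ((isometry_toLp_prod_const x.snd).comp hγ)).snd_eq_of_no_line hY ‖x.fst‖ 0

section Splitting

variable {A B : Type*} [MetricSpace A] [MetricSpace B] (φ : WithLp 2 (A × B) ≃ᵢ WithLp 2 (A × B))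
  {h h' : B → B}

theorem IsometryEquiv.leftInverse_of_snd_eq [Nonempty A] (hφ : ∀ x, (φ x).snd = h x.snd)
    (hφ' : ∀ x, (φ.symm x).snd = h' x.snd) : Function.LeftInverse h' h := fun b => by
  obtain ⟨a⟩ := ‹Nonempty A›
  simpa only [← hφ', φ.symm_apply_apply, toLp_snd] using congrArg h' (hφ (toLp 2 (a, b))).symm

theorem IsometryEquiv.isometry_of_snd_eq [Nonempty A] (hφ : ∀ x, (φ x).snd = h x.snd)
    (hφ' : ∀ x, (φ.symm x).snd = h' x.snd) : Isometry h :=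
  Isometry.of_dist_eq fun b b' => (φ.isometry.dist_le_of_snd_eq hφ b b').antisymm <| by
    simpa only [φ.leftInverse_of_snd_eq hφ hφ' _] using
      φ.symm.isometry.dist_le_of_snd_eq hφ' (h b) (h b')

theorem IsometryEquiv.surjective_of_snd_eq [Nonempty A] (hφ : ∀ x, (φ x).snd = h x.snd)
    (hφ' : ∀ x, (φ.symm x).snd = h' x.snd) : Function.Surjective h :=
  (φ.symm.leftInverse_of_snd_eq hφ' (by simpa only [φ.symm_symm] using hφ)).surjective

theorem IsometryEquiv.exists_prod_of_snd_eq [Nonempty A] (hφ : ∀ x, (φ x).snd = h x.snd)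
    (hφ' : ∀ x, (φ.symm x).snd = h' x.snd) :
    ∃ g : A → A, Isometry g ∧ Function.Surjective g ∧
      ∀ a b, φ (toLp 2 (a, b)) = toLp 2 (g a, h b) := by
  rcases isEmpty_or_nonempty B with hB | ⟨⟨b₀⟩⟩
  · exact ⟨id, isometry_id, Function.surjective_id, fun _ b => isEmptyElim b⟩
  have hh := φ.isometry_of_snd_eq hφ hφ'
  have dist_fst : ∀ x y, dist (φ x).fst (φ y).fst = dist x.fst y.fst := fun x y => by
    have := φ.isometry.dist_fst_sq_add_dist_sq_of_snd_eq hφ x y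
    rw [hh.dist_eq, add_left_inj] at this
    exact (sq_eq_sq₀ dist_nonneg dist_nonneg).1 this
  set g : A → A := fun a => (φ (toLp 2 (a, b₀))).fst
  have hg : ∀ x, (φ x).fst = g x.fst := fun x =>
    dist_eq_zero.1 <| (dist_fst _ _).trans <| by simp only [toLp_fst, dist_self]
  refine ⟨g, Isometry.of_dist_eq fun a a' => dist_fst _ _, fun a => ?_, fun a b => ?_⟩
  · exact ⟨(φ.symm (toLp 2 (a, b₀))).fst, by simp only [← hg, φ.apply_symm_apply, toLp_fst]⟩
  · calc φ (toLp 2 (a, b)) = toLp 2 ((φ (toLp 2 (a, b))).fst, (φ (toLp 2 (a, b))).snd) := rfl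
      _ = toLp 2 (g a, h b) := by simp only [hg, hφ, toLp_fst, toLp_snd]

end Splitting

theorem isometry_prod_splits_of_no_line_general (k : ℕ)
    (Y : Type*) [MetricSpace Y]
    (hY : ¬ ∃ γ : ℝ → Y, ∀ s t : ℝ, dist (γ s) (γ t) = |s - t|)
    (φ : WithLp 2 (EuclideanSpace ℝ (Fin k) × Y) →
      WithLp 2 (EuclideanSpace ℝ (Fin k) × Y))
    (hφ : Isometry φ) (hφsurj : Function.Surjective φ) :
    ∃ (g : EuclideanSpace ℝ (Fin k) → EuclideanSpace ℝ (Fin k)) (h : Y → Y),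
      Isometry g ∧ Function.Surjective g ∧ Isometry h ∧ Function.Surjective h ∧
      ∀ (v : EuclideanSpace ℝ (Fin k)) (y : Y),
        φ ((WithLp.equiv 2 (EuclideanSpace ℝ (Fin k) × Y)).symm (v, y)) =
          (WithLp.equiv 2 (EuclideanSpace ℝ (Fin k) × Y)).symm (g v, h y) := by
  have hY' : ¬ ∃ γ : ℝ → Y, Isometry γ := fun ⟨γ, hγ⟩ =>
    hY ⟨γ, fun s t => (hγ.dist_eq s t).trans (Real.dist_eq s t)⟩
  let e : WithLp 2 (EuclideanSpace ℝ (Fin k) × Y) ≃ᵢ WithLp 2 (EuclideanSpace ℝ (Fin k) × Y) :=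
    { Equiv.ofBijective φ ⟨hφ.injective, hφsurj⟩ with isometry_toFun := hφ }
  obtain ⟨h, hh⟩ := exists_snd_eq_of_no_line hY' e.isometry
  obtain ⟨h', hh'⟩ := exists_snd_eq_of_no_line hY' e.symm.isometry
  obtain ⟨g, hg, hg_surj, hsplit⟩ := e.exists_prod_of_snd_eq hh hh'
  exact ⟨g, h, hg, hg_surj, e.isometry_of_snd_eq hh hh', e.surjective_of_snd_eq hh hh', hsplit⟩

/-- **Splitting of isometries of `ℝ^k ×₂ Y` when `Y` contains no line.**
If `Y` is a metric space containing no line (no isometric embedding of `ℝ`), and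
`X` is the `ℓ²`-product of `EuclideanSpace ℝ (Fin k)` and `Y`, then every surjective
isometry of `X` splits as a product of a surjective isometry of the Euclidean factor
and a surjective isometry of `Y`. -/
theorem isometry_prod_splits_of_no_line (k : ℕ) (hk : 1 ≤ k)
    (Y : Type*) [MetricSpace Y]
    (hY : ¬ ∃ γ : ℝ → Y, ∀ s t : ℝ, dist (γ s) (γ t) = |s - t|)
    (φ : WithLp 2 (EuclideanSpace ℝ (Fin k) × Y) →
      WithLp 2 (EuclideanSpace ℝ (Fin k) × Y))
    (hφ : Isometry φ) (hφsurj : Function.Surjective φ) :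
    ∃ (g : EuclideanSpace ℝ (Fin k) → EuclideanSpace ℝ (Fin k)) (h : Y → Y),
      Isometry g ∧ Function.Surjective g ∧ Isometry h ∧ Function.Surjective h ∧
      ∀ (v : EuclideanSpace ℝ (Fin k)) (y : Y),
        φ ((WithLp.equiv 2 (EuclideanSpace ℝ (Fin k) × Y)).symm (v, y)) =
          (WithLp.equiv 2 (EuclideanSpace ℝ (Fin k) × Y)).symm (g v, h y) :=
  isometry_prod_splits_of_no_line_general k Y hY φ hφ hφsurj
end

section
/- Let n ≥ 3 be a natural number, set k := n − 2, let (X, dist) be a proper metric space and p ∈ X. Suppose the free abelian group ℤ^k, with standard basis e₁, …, e_k, acts on X by isometries in such a way that for every c > 0 the set {v ∈ ℤ^k : dist(v • p, p) ≤ c} is finite. For 0 ≤ j ≤ k let S_j := {v • p : v ∈ span_ℤ(e₁, …, e_j)} denote the orbit of p under the subgroup generated by e₁, …, e_j (so S₀ = {p}). Then for every R > 0 there exist positive integers k₁, …, k_k and a constant C > 0 such that for every j ∈ {1, …, k}: R/(2n) ≤ infDist((k_j • e_j) • p, S_{j−1}) ≤ R/(2n) + C, and moreover for every natural number t < k_j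 one has infDist((t • e_j) • p, S_{j−1}) ≤ R/(2n). -/
open Metric

/-- The orbit of `p` under the subgroup of `ℤ^k` generated by the first `j` standard
basis vectors `e₁, …, e_j`, for an action `A` of `ℤ^k` on `X`: the set of points
`A v p` where `v` is supported on coordinates of index `< j`. -/
def orbitUpTo {k : ℕ} {X : Type*} (A : (Fin k → ℤ) → X → X) (p : X) (j : ℕ) :
    Set X :=
  {x | ∃ v : Fin k → ℤ, (∀ i : Fin k, j ≤ (i : ℕ) → v i = 0) ∧ x = A v p}

/-- **Calibrated lattice points along the orbits.**
Let `n ≥ 3`, `k := n - 2`, and let `ℤ^k` act by isometries on a proper metric space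
`X` so that for every `c > 0` only finitely many group elements displace the
basepoint `p` by at most `c`.  Then for every `R > 0` there are positive integers
`K j` and a constant `C > 0` such that for every (0-based) index `j`,
`R/(2n) ≤ infDist ((K j • e_j) • p, S_j) ≤ R/(2n) + C`, while for every natural
number `t < K j` one has `infDist ((t • e_j) • p, S_j) ≤ R/(2n)`.  Here `S_j` is the
orbit of `p` under the subgroup generated by the first `j` basis vectors. -/
theorem exists_calibrated_lattice_points (n : ℕ) (hn : 3 ≤ n)
    (X : Type*) [MetricSpace X] [ProperSpace X] (p : X)
    (A : (Fin (n - 2) → ℤ) → X → X)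
    (hA0 : ∀ x, A 0 x = x)
    (hAadd : ∀ v w x, A (v + w) x = A v (A w x))
    (hAiso : ∀ v, Isometry (A v))
    (hfin : ∀ c : ℝ, 0 < c → {v : Fin (n - 2) → ℤ | dist (A v p) p ≤ c}.Finite) :
    ∀ R : ℝ, 0 < R →
      ∃ (K : Fin (n - 2) → ℕ) (C : ℝ), 0 < C ∧ (∀ j, 0 < K j) ∧
        ∀ j : Fin (n - 2),
          R / (2 * n) ≤
              infDist (A ((K j : ℤ) • Pi.single j 1) p) (orbitUpTo A p j) ∧
          infDist (A ((K j : ℤ) • Pi.single j 1) p) (orbitUpTo A p j) ≤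
              R / (2 * n) + C ∧
          ∀ t : ℕ, t < K j →
            infDist (A ((t : ℤ) • Pi.single j 1) p) (orbitUpTo A p j) ≤
              R / (2 * n) := by
  intro R hR
  have hnpos : (0:ℝ) < n := by
    have : (3:ℝ) ≤ n := by exact_mod_cast hn
    linarith
  set M : ℝ := R / (2 * n) with hMdef
  have hM : 0 < M := by
    apply div_pos hR; linarith
  have hmem0 : ∀ j : Fin (n-2), p ∈ orbitUpTo A p j :=
    fun j => ⟨0, fun i _ => rfl, (hA0 p).symm⟩
  have hnonempty : ∀ j : Fin (n-2), (orbitUpTo A p j).Nonempty :=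
    fun j => ⟨p, hmem0 j⟩
  set e : Fin (n-2) → (Fin (n-2) → ℤ) := fun j => Pi.single j 1 with he
  set f : Fin (n-2) → ℕ → ℝ :=
    fun j t => infDist (A ((t:ℤ) • e j) p) (orbitUpTo A p j) with hf
  set D : Fin (n-2) → ℝ := fun j => dist (A (e j) p) p with hD
  have hf0 : ∀ j, f j 0 ≤ M := by
    intro j
    have : f j 0 = 0 := by
      simp only [hf, Nat.cast_zero, zero_smul]
      rw [hA0, infDist_zero_of_mem (hmem0 j)]
    rw [this]; exact hM.le
  have hstep : ∀ j t, f j (t+1) ≤ f j t + D j := by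
    intro j t
    have h1 : dist (A (((t:ℤ)+1) • e j) p) (A ((t:ℤ) • e j) p) = D j := by
      have hsm : ((t:ℤ)+1) • e j = (t:ℤ) • e j + e j := by
        rw [add_smul, one_smul]
      rw [hsm, hAadd, (hAiso ((t:ℤ) • e j)).dist_eq]
    have h2 := infDist_le_infDist_add_dist (x := A (((t:ℤ)+1) • e j) p)
      (y := A ((t:ℤ) • e j) p) (s := orbitUpTo A p j)
    rw [h1] at h2
    have hcast : ((t+1 : ℕ) : ℤ) = (t:ℤ) + 1 := by push_cast; ring
    simpa only [hf, hcast] using h2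
  have hexists : ∀ j : Fin (n-2), ∃ t : ℕ, M < f j t := by
    intro j
    by_contra h
    push_neg at h
    have hfin' := hfin (M+1) (by linarith)
    have key : ∀ t : ℕ, ∃ w : Fin (n-2) → ℤ,
        w j = (t:ℤ) ∧ dist (A w p) p ≤ M + 1 := by
      intro t
      have hlt : f j t < M + 1 := lt_of_le_of_lt (h t) (by linarith)
      obtain ⟨y, hy, hdy⟩ := (infDist_lt_iff (hnonempty j)).1 hlt
      obtain ⟨v, hv, rfl⟩ := hy
      refine ⟨(t:ℤ) • e j - v, ?_, ?_⟩
      · have hvj : v j = 0 := hv j le_rfl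
        simp [he, hvj, Pi.single_apply]
      · have h2 : A ((t:ℤ) • e j) p = A v (A ((t:ℤ) • e j - v) p) := by
          rw [← hAadd, add_sub_cancel]
        have h3 : dist (A ((t:ℤ) • e j - v) p) p
            = dist (A ((t:ℤ) • e j) p) (A v p) := by
          rw [h2, (hAiso v).dist_eq]
        rw [h3]
        exact hdy.le
    choose g hg1 hg2 using key
    have hinj : Function.Injective g := by
      intro a b hab
      have h1 := hg1 a
      rw [hab, hg1 b] at h1
      exact_mod_cast h1.symm
    exact absurd hfin' (Set.infinite_of_injective_forall_mem hinj hg2)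
  set K : Fin (n-2) → ℕ := fun j => Nat.find (hexists j) with hK
  have hKspec : ∀ j, M < f j (K j) := fun j => Nat.find_spec (hexists j)
  have hKlt : ∀ j, ∀ t, t < K j → f j t ≤ M :=
    fun j t ht => not_lt.1 (Nat.find_min (hexists j) ht)
  have hKpos : ∀ j, 0 < K j := by
    intro j
    rcases Nat.eq_zero_or_pos (K j) with h | h
    · exfalso
      have h1 := hKspec j
      rw [h] at h1
      exact absurd (hf0 j) (not_le.2 h1)
    · exact h
  have hDnn : ∀ j, 0 ≤ D j := fun j => dist_nonneg
  set C : ℝ := 1 + ∑ j, D j with hC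
  have hCpos : 0 < C := by
    have : 0 ≤ ∑ j, D j := Finset.sum_nonneg fun j _ => hDnn j
    rw [hC]; linarith
  refine ⟨K, C, hCpos, hKpos, fun j => ⟨(hKspec j).le, ?_, fun t ht => hKlt j t ht⟩⟩
  obtain ⟨m, hm⟩ : ∃ m, K j = m + 1 :=
    ⟨K j - 1, (Nat.succ_pred_eq_of_pos (hKpos j)).symm⟩
  have h1 : f j (K j) ≤ f j m + D j := by rw [hm]; exact hstep j m
  have h2 : f j m ≤ M := hKlt j m (by omega)
  have h3 : D j ≤ C := by
    have := Finset.single_le_sum (f := D) (fun i _ => hDnn i) (Finset.mem_univ j)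
    rw [hC]; linarith
  show f j (K j) ≤ M + C
  linarith
end

section
/- Let n ≥ 1 and let f, u : EuclideanSpace ℝ (Fin n) → ℝ be locally Lipschitz functions that are everywhere strictly positive. Assume that for every nonnegative Lipschitz function φ : EuclideanSpace ℝ (Fin n) → ℝ with compact support one has ∫ ⟨∇u(x), ∇φ(x)⟩ f(x) dx ≥ 0, where ∇ denotes the gradient, which exists Lebesgue-almost everywhere by Rademacher's theorem. Then for every nonnegative Lipschitz function φ with compact support: ∫ φ(x)² ‖∇u(x)‖² / (1 + u(x))² · f(x) dx ≤ 16 ∫ ‖∇φ(x)‖² f(x) dx. -/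
/-!
Test the superharmonicity of `u` against `ψ = φ² / (1 + u)`, which is Lipschitz with compact
support. By Rademacher's theorem, almost everywhere `∇ψ = 2φ/(1+u) ∇φ - φ²/(1+u)² ∇u`, so the
hypothesis gives `∫ φ² ‖∇u‖²/(1+u)² f ≤ 2 ∫ φ/(1+u) ⟪∇u, ∇φ⟫ f`. Young's inequality bounds the
right-hand side by half the left-hand side plus `2 ∫ ‖∇φ‖² f`, which yields the estimate with
constant `4`.
-/

open MeasureTheory Metric Set Filter
open scoped RealInnerProductSpace NNReal

section Lipschitz

variable {α : Type*} [PseudoMetricSpace α]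

lemma LocallyLipschitz.comp_of_contDiffAt {𝕂 : Type*} [RCLike 𝕂] {E F : Type*}
    [NormedAddCommGroup E] [NormedSpace 𝕂 E] [NormedAddCommGroup F] [NormedSpace 𝕂 F]
    {g : α → E} {h : E → F} (hh : ∀ x, ContDiffAt 𝕂 1 h (g x)) (hg : LocallyLipschitz g) :
    LocallyLipschitz (h ∘ g) := by
  intro x
  obtain ⟨Kh, t', ht', hh'⟩ := (hh x).exists_lipschitzOnWith
  obtain ⟨Kg, t, ht, hg'⟩ := hg x
  exact ⟨Kh * Kg, t ∩ g ⁻¹' t', inter_mem ht (hg.continuous.continuousAt ht'),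
    hh'.comp (hg'.mono inter_subset_left) fun _ hy => hy.2⟩

lemma HasCompactSupport.sq_div {φ g : α → ℝ} (hφc : HasCompactSupport φ) :
    HasCompactSupport fun x => φ x ^ 2 / g x :=
  hφc.mono fun x hx h => hx (by simp [h])

variable [ProperSpace α]

/- `f` is Lipschitz on the compact `1`-thickening `s` of its support; a pair of points not both
in `s` is either mapped to `0, 0` or at distance at least `1`, where `f` is bounded. -/
lemma LocallyLipschitz.exists_lipschitzWith_of_hasCompactSupport {β : Type*}
    [SeminormedAddCommGroup β] {f : α → β} (hf : LocallyLipschitz f) (hc : HasCompactSupport f) :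
    ∃ K, LipschitzWith K f := by
  set s := cthickening 1 (tsupport f)
  obtain ⟨L, hL⟩ :=
    LocallyLipschitzOn.exists_lipschitzOnWith_of_compact hc.isCompact.cthickening
      (hf.locallyLipschitzOn (s := s))
  obtain ⟨M, hM⟩ := hc.exists_bound_of_continuous hf.continuous
  have hfar : ∀ x y, y ∉ s → dist (f x) (f y) ≤ max M 0 * dist x y := by
    intro x y hy
    rw [image_eq_zero_of_notMem_tsupport fun h => hy (self_subset_cthickening _ h),
      dist_zero_right]
    by_cases hx : x ∈ tsupport f
    · have hxy : 1 ≤ dist x y := by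
        by_contra! h
        exact hy (mem_cthickening_of_dist_le y x 1 _ hx (by rw [dist_comm]; exact h.le))
      nlinarith [hM x, le_max_left M 0, le_max_right M 0]
    · rw [image_eq_zero_of_notMem_tsupport hx, norm_zero]
      positivity
  refine ⟨L + (max M 0).toNNReal, LipschitzWith.of_dist_le_mul fun x y => ?_⟩
  have hLd : 0 ≤ (L : ℝ) * dist x y := mul_nonneg L.coe_nonneg dist_nonneg
  push_cast
  rw [Real.coe_toNNReal _ (le_max_right M 0), add_mul]
  by_cases hy : y ∈ s
  · by_cases hx : x ∈ s
    · linarith [hL.dist_le_mul x hx y hy,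
        mul_nonneg (le_max_right M 0) (dist_nonneg (x := x) (y := y))]
    · have := hfar y x hx
      rw [dist_comm, dist_comm y] at this
      linarith
  · linarith [hfar x y hy]

lemma LocallyLipschitz.exists_lipschitzWith_sq_div {φ u : α → ℝ} (hφ : LocallyLipschitz φ)
    (hφc : HasCompactSupport φ) (hu : LocallyLipschitz u) (hu0 : ∀ x, 0 ≤ u x) :
    ∃ K, LipschitzWith K fun x => φ x ^ 2 / (1 + u x) := by
  have hloc : LocallyLipschitz fun x => φ x ^ 2 / (1 + u x) :=
    (hφ.prodMk hu).comp_of_contDiffAt (h := fun p : ℝ × ℝ => p.1 ^ 2 / (1 + p.2)) fun x =>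
      (contDiffAt_fst.pow 2).div (contDiffAt_const.add contDiffAt_snd) (by linarith [hu0 x])
  exact hloc.exists_lipschitzWith_of_hasCompactSupport hφc.sq_div

end Lipschitz

section Derivative

variable {E F : Type*} [NormedAddCommGroup E] [NormedSpace ℝ E] [NormedAddCommGroup F]
  [NormedSpace ℝ F]

theorem LocallyLipschitz.ae_differentiableAt [FiniteDimensional ℝ E] [FiniteDimensional ℝ F]
    [MeasurableSpace E] [BorelSpace E] {μ : Measure E} [μ.IsAddHaarMeasure] {f : E → F}
    (hf : LocallyLipschitz f) :
    ∀ᵐ x ∂μ, DifferentiableAt ℝ f x := by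
  have hball : ∀ n : ℕ, ∀ᵐ x ∂μ, x ∈ ball (0 : E) n → DifferentiableAt ℝ f x := fun n => by
    obtain ⟨C, hC⟩ := LocallyLipschitzOn.exists_lipschitzOnWith_of_compact
      (isCompact_closedBall (0 : E) n) hf.locallyLipschitzOn
    filter_upwards [(hC.mono ball_subset_closedBall).ae_differentiableWithinAt_of_mem (μ := μ)]
      with x hx hxn
    exact (hx hxn).differentiableAt (isOpen_ball.mem_nhds hxn)
  filter_upwards [ae_all_iff.2 hball] with x hx
  obtain ⟨n, hn⟩ := exists_nat_gt ‖x‖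
  exact hx n (mem_ball_zero_iff.2 hn)

theorem LocallyLipschitz.exists_forall_norm_fderiv_le [ProperSpace E] {f : E → F}
    (hf : LocallyLipschitz f) {K : Set E} (hK : IsCompact K) :
    ∃ C : ℝ≥0, ∀ x ∈ K, ‖fderiv ℝ f x‖ ≤ C := by
  obtain ⟨C, hC⟩ :=
    LocallyLipschitzOn.exists_lipschitzOnWith_of_compact hK.cthickening hf.locallyLipschitzOn
  refine ⟨C, fun x hx => norm_fderiv_le_of_lipschitzOn ℝ ?_ hC⟩
  exact mem_of_superset (isOpen_thickening.mem_nhds (self_subset_thickening one_pos K hx))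
    (thickening_subset_cthickening 1 K)

end Derivative

section Gradient

variable {E : Type*} [NormedAddCommGroup E] [InnerProductSpace ℝ E] [CompleteSpace E]

theorem norm_gradient (f : E → ℝ) (x : E) : ‖gradient f x‖ = ‖fderiv ℝ f x‖ := by
  rw [← toDual_gradient, LinearIsometryEquiv.norm_map]

theorem measurable_gradient [FiniteDimensional ℝ E] [MeasurableSpace E] [BorelSpace E]
    (f : E → ℝ) : Measurable (gradient f) :=
  (InnerProductSpace.toDual ℝ E).symm.continuous.measurable.comp (measurable_fderiv ℝ f)

theorem gradient_sq_div {φ u : E → ℝ} {x : E} (hφ : DifferentiableAt ℝ φ x)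
    (hu : DifferentiableAt ℝ u x) (hx : 1 + u x ≠ 0) :
    gradient (fun y => φ y ^ 2 / (1 + u y)) x =
      (2 * φ x / (1 + u x)) • gradient φ x - (φ x ^ 2 / (1 + u x) ^ 2) • gradient u x := by
  have hinv := (hasDerivAt_inv hx).comp_hasFDerivAt x (hu.hasFDerivAt.const_add 1)
  have hψ := (hφ.hasFDerivAt.pow 2).mul hinv
  have hfun : (fun y => φ y ^ 2 / (1 + u y)) =
      (fun y => φ y ^ 2) * ((·⁻¹) ∘ fun y => 1 + u y) := by
    ext y
    simp [div_eq_mul_inv]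
  refine HasGradientAt.gradient ?_
  rw [hasGradientAt_iff_hasFDerivAt, hfun]
  refine hψ.congr_fderiv ?_
  rw [map_sub, map_smul, map_smul, toDual_gradient, toDual_gradient]
  ext v
  simp only [neg_smul, smul_neg, Function.comp_apply, Nat.add_one_sub_one, pow_one, nsmul_eq_mul,
    Nat.cast_ofNat, add_apply, neg_apply, smul_apply, smul_eq_mul, sub_apply]
  field_simp
  ring

end Gradient

theorem abs_mul_inner_le {E : Type*} [NormedAddCommGroup E] [InnerProductSpace ℝ E]
    (c : ℝ) (a b : E) : |c * ⟪a, b⟫| ≤ c ^ 2 * ‖a‖ ^ 2 / 4 + ‖b‖ ^ 2 := by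
  rw [abs_mul]
  have := abs_real_inner_le_norm a b
  nlinarith [sq_nonneg (|c| * ‖a‖ - 2 * ‖b‖), sq_abs c, abs_nonneg c]

theorem IsCompact.integrable_of_norm_le {X : Type*} [TopologicalSpace X] [T2Space X]
    [MeasurableSpace X] [OpensMeasurableSpace X] {μ : Measure X} [IsFiniteMeasureOnCompacts μ]
    {K : Set X} (hK : IsCompact K) {g : X → ℝ} (hg : AEStronglyMeasurable g μ) {C : ℝ}
    (hbound : ∀ x ∈ K, ‖g x‖ ≤ C) (hzero : ∀ x ∉ K, g x = 0) : Integrable g μ :=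
  (IntegrableOn.of_bound hK.measure_lt_top hg.restrict C
    (ae_restrict_of_forall_mem hK.measurableSet hbound)).integrable_of_forall_notMem_eq_zero hzero

section Yau

variable {E : Type*} [NormedAddCommGroup E] [InnerProductSpace ℝ E] [FiniteDimensional ℝ E]
  [MeasurableSpace E] [BorelSpace E] {μ : Measure E} {f u φ : E → ℝ}

theorem integrable_sq_mul_norm_gradient_div_sq_mul [IsFiniteMeasureOnCompacts μ]
    (hf : Continuous f) (hu : LocallyLipschitz u) (hu0 : ∀ x, 0 ≤ u x) (hφ : Continuous φ)
    (hφc : HasCompactSupport φ) :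
    Integrable (fun x => φ x ^ 2 * (‖gradient u x‖ ^ 2 / (1 + u x) ^ 2) * f x) μ := by
  obtain ⟨A, hA⟩ := hφc.exists_bound_of_continuous hφ
  obtain ⟨B, hB⟩ := hu.exists_forall_norm_fderiv_le hφc.isCompact
  obtain ⟨M, hM⟩ := hφc.isCompact.exists_bound_of_continuousOn hf.continuousOn
  refine hφc.isCompact.integrable_of_norm_le (C := A ^ 2 * B ^ 2 * M) ?_ (fun x hx => ?_)
    fun x hx => by simp [image_eq_zero_of_notMem_tsupport hx]
  · have := measurable_gradient u
    have := hu.continuous.measurable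
    exact (by fun_prop : Measurable _).aestronglyMeasurable
  · have hgrad : ‖gradient u x‖ ^ 2 / (1 + u x) ^ 2 ≤ B ^ 2 := by
      refine (div_le_self (sq_nonneg _) (one_le_pow₀ (by linarith [hu0 x]))).trans ?_
      rw [norm_gradient]
      gcongr
      exact hB x hx
    rw [norm_mul, norm_mul, norm_pow,
      Real.norm_of_nonneg (by positivity : 0 ≤ ‖gradient u x‖ ^ 2 / (1 + u x) ^ 2)]
    gcongr
    exacts [hA x, hM x hx]

theorem integrable_norm_gradient_sq_mul [IsFiniteMeasureOnCompacts μ] (hf : Continuous f)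
    {K : ℝ≥0} (hφ : LipschitzWith K φ) (hφc : HasCompactSupport φ) :
    Integrable (fun x => ‖gradient φ x‖ ^ 2 * f x) μ := by
  obtain ⟨M, hM⟩ := hφc.isCompact.exists_bound_of_continuousOn hf.continuousOn
  refine hφc.isCompact.integrable_of_norm_le (C := K ^ 2 * M) ?_ (fun x hx => ?_)
    fun x hx => ?_
  · have := measurable_gradient φ
    exact (by fun_prop : Measurable _).aestronglyMeasurable
  · rw [norm_mul, norm_pow, norm_norm, norm_gradient]
    gcongr
    exacts [norm_fderiv_le_of_lipschitz ℝ hφ, hM x hx]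
  · have : fderiv ℝ φ x = 0 := Function.notMem_support.1 fun h => hx (support_fderiv_subset ℝ h)
    simp [gradient, this]

theorem ae_inner_gradient_sq_div_mul_eq [μ.IsAddHaarMeasure] (hu : LocallyLipschitz u)
    (hu0 : ∀ x, 0 ≤ u x) (hφ : LocallyLipschitz φ) :
    (fun x => ⟪gradient u x, gradient (fun y => φ y ^ 2 / (1 + u y)) x⟫ * f x) =ᵐ[μ]
      fun x => 2 * (φ x / (1 + u x) * ⟪gradient u x, gradient φ x⟫ * f x) -
        φ x ^ 2 * (‖gradient u x‖ ^ 2 / (1 + u x) ^ 2) * f x := by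
  filter_upwards [hu.ae_differentiableAt, hφ.ae_differentiableAt] with x hux hφx
  rw [gradient_sq_div hφx hux (by linarith [hu0 x]), inner_sub_right, real_inner_smul_right,
    real_inner_smul_right, real_inner_self_eq_norm_sq]
  ring

theorem integral_sq_mul_norm_gradient_div_sq_le [μ.IsAddHaarMeasure] (hf : Continuous f)
    (hf0 : ∀ x, 0 ≤ f x) (hu : LocallyLipschitz u) (hu0 : ∀ x, 0 ≤ u x) {K : ℝ≥0}
    (hφ : LipschitzWith K φ) (hφc : HasCompactSupport φ)
    (hsuper : 0 ≤ ∫ x, ⟪gradient u x, gradient (fun y => φ y ^ 2 / (1 + u y)) x⟫ * f x ∂μ) :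
    ∫ x, φ x ^ 2 * (‖gradient u x‖ ^ 2 / (1 + u x) ^ 2) * f x ∂μ ≤
      4 * ∫ x, ‖gradient φ x‖ ^ 2 * f x ∂μ := by
  set H := fun x => φ x ^ 2 * (‖gradient u x‖ ^ 2 / (1 + u x) ^ 2) * f x
  set R := fun x => ‖gradient φ x‖ ^ 2 * f x
  set G := fun x => φ x / (1 + u x) * ⟪gradient u x, gradient φ x⟫ * f x
  have hH : Integrable H μ :=
    integrable_sq_mul_norm_gradient_div_sq_mul hf hu hu0 hφ.continuous hφc
  have hR : Integrable R μ := integrable_norm_gradient_sq_mul hf hφ hφc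
  have hGle : ∀ x, |G x| ≤ H x / 4 + R x := fun x => calc
    |G x| = |φ x / (1 + u x) * ⟪gradient u x, gradient φ x⟫| * f x := by
      rw [abs_mul, abs_of_nonneg (hf0 x)]
    _ ≤ ((φ x / (1 + u x)) ^ 2 * ‖gradient u x‖ ^ 2 / 4 + ‖gradient φ x‖ ^ 2) * f x :=
      mul_le_mul_of_nonneg_right (abs_mul_inner_le _ _ _) (hf0 x)
    _ = H x / 4 + R x := by simp only [H, R, div_pow]; ring
  have hG : Integrable G μ := by
    refine (hH.div_const 4 |>.add hR).mono' ?_ (ae_of_all _ hGle)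
    exact (((hφ.continuous.measurable.div (measurable_const.add hu.continuous.measurable)).mul
      ((measurable_gradient u).inner (measurable_gradient φ))).mul
      hf.measurable).aestronglyMeasurable
  have habsorb : ∫ x, H x ∂μ ≤ 2 * ∫ x, G x ∂μ := by
    rw [integral_congr_ae (ae_inner_gradient_sq_div_mul_eq hu hu0 hφ.locallyLipschitz),
      integral_sub (hG.const_mul 2) hH, integral_const_mul] at hsuper
    linarith
  have hyoung : ∫ x, G x ∂μ ≤ (∫ x, H x ∂μ) / 4 + ∫ x, R x ∂μ := by
    rw [← integral_div, ← integral_add (hH.div_const 4) hR]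
    exact integral_mono hG (hH.div_const 4 |>.add hR) fun x => (le_abs_self _).trans (hGle x)
  linarith

end Yau

theorem yau_integration_by_parts_general (n : ℕ)
    (f u : EuclideanSpace ℝ (Fin n) → ℝ)
    (hf : LocallyLipschitz f) (hu : LocallyLipschitz u)
    (hfpos : ∀ x, 0 < f x) (hupos : ∀ x, 0 < u x)
    (hsuper : ∀ φ : EuclideanSpace ℝ (Fin n) → ℝ, (∀ x, 0 ≤ φ x) →
      (∃ K, LipschitzWith K φ) → HasCompactSupport φ →
      0 ≤ ∫ x, ⟪gradient u x, gradient φ x⟫ * f x) :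
    ∀ φ : EuclideanSpace ℝ (Fin n) → ℝ, (∀ x, 0 ≤ φ x) →
      (∃ K, LipschitzWith K φ) → HasCompactSupport φ →
      ∫ x, φ x ^ 2 * (‖gradient u x‖ ^ 2 / (1 + u x) ^ 2) * f x ≤
        16 * ∫ x, ‖gradient φ x‖ ^ 2 * f x := by
  rintro φ - ⟨K, hφ⟩ hφc
  have hu0 : ∀ x, 0 ≤ u x := fun x => (hupos x).le
  obtain ⟨Kψ, hψ⟩ := hφ.locallyLipschitz.exists_lipschitzWith_sq_div hφc hu hu0
  have hψ0 : ∀ x, 0 ≤ φ x ^ 2 / (1 + u x) := fun x => by have := hu0 x; positivity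
  have hmain := integral_sq_mul_norm_gradient_div_sq_le hf.continuous (fun x => (hfpos x).le)
    hu hu0 hφ hφc (hsuper _ hψ0 ⟨Kψ, hψ⟩ hφc.sq_div)
  have hR : 0 ≤ ∫ x, ‖gradient φ x‖ ^ 2 * f x :=
    integral_nonneg fun x => mul_nonneg (sq_nonneg _) (hfpos x).le
  linarith

/-- **Yau-type integration-by-parts inequality.**
Let `f, u : ℝⁿ → ℝ` be locally Lipschitz and strictly positive, and assume that `u`
is weakly superharmonic with respect to the weight `f`, i.e.
`∫ ⟪∇u, ∇φ⟫ f ≥ 0` for every nonnegative compactly supported Lipschitz `φ`.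
Then for every nonnegative compactly supported Lipschitz `φ` one has
`∫ φ² ‖∇u‖² / (1 + u)² · f ≤ 16 ∫ ‖∇φ‖² f`.
All gradients are taken via Mathlib's `gradient`, which agrees a.e. with the true
gradient by Rademacher's theorem; integrals are over Lebesgue measure. -/
theorem yau_integration_by_parts (n : ℕ) (hn : 1 ≤ n)
    (f u : EuclideanSpace ℝ (Fin n) → ℝ)
    (hf : LocallyLipschitz f) (hu : LocallyLipschitz u)
    (hfpos : ∀ x, 0 < f x) (hupos : ∀ x, 0 < u x)
    (hsuper : ∀ φ : EuclideanSpace ℝ (Fin n) → ℝ, (∀ x, 0 ≤ φ x) →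
      (∃ K, LipschitzWith K φ) → HasCompactSupport φ →
      0 ≤ ∫ x, ⟪gradient u x, gradient φ x⟫ * f x) :
    ∀ φ : EuclideanSpace ℝ (Fin n) → ℝ, (∀ x, 0 ≤ φ x) →
      (∃ K, LipschitzWith K φ) → HasCompactSupport φ →
      ∫ x, φ x ^ 2 * (‖gradient u x‖ ^ 2 / (1 + u x) ^ 2) * f x ≤
        16 * ∫ x, ‖gradient φ x‖ ^ 2 * f x :=
  yau_integration_by_parts_general n f u hf hu hfpos hupos hsuper
end

section
/- Let F : (0, ∞) → (0, ∞) be continuous and integrable on (0, 1), and set A(t) := ∫₀ᵗ F(s) ds for t > 0. Assume the parabolicity condition ∫₁^∞ t / A(t) dt = +∞. Let φ : (0, ∞) → (0, ∞) be locally Lipschitz, and assume that for every δ > 0 and every nonnegative Lipschitz function ψ : [δ, ∞) → ℝ vanishing outside some bounded set, one has ∫_δ^∞ φ′(t) ψ′(t) F(t) dt ≥ 0 (the derivatives φ′ and ψ′ exist almost everywhere since the functions are locally Lipschitz). Then φ is constant on (0, ∞). -/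
/-!
Test the weak inequality against a tent `ψ` that rises from `0` to `1` on `(a, b)` and falls
back to `0` on `(b, c)`, each slope being the equilibrium potential `∫ 1/F` normalised by the
resistance `R(a, b) = ∫_a^b 1/F`. This gives `(φ c - φ b) / R(b, c) ≤ (φ b - φ a) / R(a, b)`:
the mean flux of `F φ'` does not increase. Starting the test at `δ = b` instead shows that `φ`
is nonincreasing. Parabolicity forces `R(b, c) → ∞`: by AM-GM `t² / A(2t) ≤ ∫_t^{2t} 1/F`, so
summing over dyadic blocks, `∫^∞ t / A(t) dt` is dominated by `8 ∫^∞ 1/F`. As `φ > 0`, the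
flux inequality yields `φ a - φ b ≤ φ b · R(a, b) / R(b, c) → 0`, so `φ` is also nondecreasing.
-/

open MeasureTheory Set Filter Function Topology

open scoped ENNReal

noncomputable def resistance (F : ℝ → ℝ) (a b : ℝ) : ℝ := ∫ s in a..b, (F s)⁻¹

section Weight

variable {F : ℝ → ℝ}

lemma intervalIntegrable_inv (hFcont : ContinuousOn F (Ioi 0))
    (hFpos : ∀ t, 0 < t → 0 < F t) {a b : ℝ} (ha : 0 < a) (hb : 0 < b) :
    IntervalIntegrable (fun s => (F s)⁻¹) volume a b :=
  ((hFcont.inv₀ fun t ht => (hFpos t ht).ne').mono fun _ hs =>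
    (lt_min ha hb).trans_le hs.1).intervalIntegrable

lemma resistance_pos (hFcont : ContinuousOn F (Ioi 0)) (hFpos : ∀ t, 0 < t → 0 < F t)
    {a b : ℝ} (ha : 0 < a) (hab : a < b) : 0 < resistance F a b :=
  intervalIntegral.intervalIntegral_pos_of_pos_on
    (intervalIntegrable_inv hFcont hFpos ha (ha.trans hab))
    (fun s hs => inv_pos.2 (hFpos s (ha.trans hs.1))) hab

lemma intervalIntegrable_zero_left (hFcont : ContinuousOn F (Ioi 0))
    (hFint : IntegrableOn F (Ioo 0 1)) {t : ℝ} (ht : 0 < t) :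
    IntervalIntegrable F volume 0 t := by
  have h01 : IntervalIntegrable F volume 0 1 := by
    rw [intervalIntegrable_iff_integrableOn_Ioc_of_le zero_le_one,
      integrableOn_Ioc_iff_integrableOn_Ioo]
    exact hFint
  exact h01.trans (hFcont.mono fun _ hs => (lt_min one_pos ht).trans_le hs.1).intervalIntegrable

lemma integral_zero_left_pos (hFcont : ContinuousOn F (Ioi 0)) (hFpos : ∀ t, 0 < t → 0 < F t)
    (hFint : IntegrableOn F (Ioo 0 1)) {t : ℝ} (ht : 0 < t) : 0 < ∫ s in (0 : ℝ)..t, F s :=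
  intervalIntegral.intervalIntegral_pos_of_pos_on (intervalIntegrable_zero_left hFcont hFint ht)
    (fun s hs => hFpos s hs.1) ht

lemma integral_le_integral_zero_left (hFcont : ContinuousOn F (Ioi 0))
    (hFpos : ∀ t, 0 < t → 0 < F t) (hFint : IntegrableOn F (Ioo 0 1)) {a b c : ℝ}
    (ha : 0 ≤ a) (hab : a ≤ b) (hbc : b ≤ c) (hc : 0 < c) :
    ∫ s in a..b, F s ≤ ∫ s in (0 : ℝ)..c, F s := by
  refine intervalIntegral.integral_mono_interval ha hab hbc ?_
    (intervalIntegrable_zero_left hFcont hFint hc)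
  filter_upwards [ae_restrict_mem measurableSet_Ioc] with s hs
  exact (hFpos s hs.1).le

lemma sq_div_le_resistance (hFcont : ContinuousOn F (Ioi 0)) (hFpos : ∀ t, 0 < t → 0 < F t)
    (hFint : IntegrableOn F (Ioo 0 1)) {u : ℝ} (hu : 0 < u) :
    u ^ 2 / ∫ s in (0 : ℝ)..2 * u, F s ≤ resistance F u (2 * u) := by
  set A := ∫ s in (0 : ℝ)..2 * u, F s
  set c := u / A
  have hA : 0 < A := integral_zero_left_pos hFcont hFpos hFint (by linarith)
  have hu2 : u ≤ 2 * u := by linarith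
  have hFu : ∫ s in u..2 * u, F s ≤ A :=
    integral_le_integral_zero_left hFcont hFpos hFint hu.le hu2 le_rfl (by linarith)
  have amgm : ∀ s ∈ Icc u (2 * u), 2 * c - c ^ 2 * F s ≤ (F s)⁻¹ := by
    intro s hs
    have hFs := hFpos s (hu.trans_le hs.1)
    rw [← sub_nonneg]
    have : (F s)⁻¹ - (2 * c - c ^ 2 * F s) = (1 - c * F s) ^ 2 / F s := by
      field_simp; ring
    rw [this]; positivity
  have hFint' : IntervalIntegrable F volume u (2 * u) :=
    (hFcont.mono fun _ hs => (lt_min hu (by linarith)).trans_le hs.1).intervalIntegrable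
  calc u ^ 2 / A = 2 * c * (2 * u - u) - c ^ 2 * A := by
        simp only [c]; field_simp; ring
    _ ≤ 2 * c * (2 * u - u) - c ^ 2 * ∫ s in u..2 * u, F s := by gcongr
    _ = ∫ s in u..2 * u, (2 * c - c ^ 2 * F s) := by
        rw [intervalIntegral.integral_sub intervalIntegrable_const (hFint'.const_mul _),
          intervalIntegral.integral_const, intervalIntegral.integral_const_mul, smul_eq_mul,
          mul_comm]
    _ ≤ resistance F u (2 * u) :=
        intervalIntegral.integral_mono_on hu2 (intervalIntegrable_const.sub (hFint'.const_mul _))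
          (intervalIntegrable_inv hFcont hFpos hu (by linarith)) amgm

lemma lintegral_Ico_div_le (hFcont : ContinuousOn F (Ioi 0)) (hFpos : ∀ t, 0 < t → 0 < F t)
    (hFint : IntegrableOn F (Ioo 0 1)) {u : ℝ} (hu : 0 < u) :
    ∫⁻ s in Ico (2 * u) (4 * u), ENNReal.ofReal (s / ∫ r in (0 : ℝ)..s, F r)
      ≤ 8 * ∫⁻ s in Ioc u (2 * u), ENNReal.ofReal (F s)⁻¹ := by
  set A := ∫ s in (0 : ℝ)..2 * u, F s
  have hA : 0 < A := integral_zero_left_pos hFcont hFpos hFint (by linarith)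
  have hbound : ∀ s ∈ Ico (2 * u) (4 * u),
      ENNReal.ofReal (s / ∫ r in (0 : ℝ)..s, F r) ≤ ENNReal.ofReal (4 * u / A) := by
    intro s hs
    refine ENNReal.ofReal_le_ofReal (div_le_div₀ (by linarith [hs.1]) hs.2.le hA ?_)
    exact integral_le_integral_zero_left hFcont hFpos hFint le_rfl (by linarith) hs.1
      (by linarith [hs.1])
  have hR : ENNReal.ofReal (resistance F u (2 * u))
      = ∫⁻ s in Ioc u (2 * u), ENNReal.ofReal (F s)⁻¹ := by
    rw [resistance, intervalIntegral.integral_of_le (by linarith)]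
    refine ofReal_integral_eq_lintegral_ofReal
      ((intervalIntegrable_inv hFcont hFpos hu (by linarith)).1) ?_
    filter_upwards [ae_restrict_mem measurableSet_Ioc] with s hs
    exact (inv_pos.2 (hFpos s (hu.trans hs.1))).le
  calc ∫⁻ s in Ico (2 * u) (4 * u), ENNReal.ofReal (s / ∫ r in (0 : ℝ)..s, F r)
      ≤ ∫⁻ _ in Ico (2 * u) (4 * u), ENNReal.ofReal (4 * u / A) :=
        setLIntegral_mono measurable_const hbound
    _ = ENNReal.ofReal (8 * (u ^ 2 / A)) := by
        rw [setLIntegral_const, Real.volume_Ico, ← ENNReal.ofReal_mul (by positivity)]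
        congr 1; ring
    _ ≤ ENNReal.ofReal (8 * resistance F u (2 * u)) := by
        gcongr; exact sq_div_le_resistance hFcont hFpos hFint hu
    _ = 8 * ∫⁻ s in Ioc u (2 * u), ENNReal.ofReal (F s)⁻¹ := by
        rw [ENNReal.ofReal_mul (by norm_num), hR]; norm_num

lemma lintegral_Ioi_le_mul_of_dyadic {f g : ℝ → ℝ≥0∞} {m : ℝ} (hm : 0 < m) (C : ℝ≥0∞)
    (h : ∀ u, m ≤ u → ∫⁻ s in Ico (2 * u) (4 * u), f s ≤ C * ∫⁻ s in Ioc u (2 * u), g s) :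
    ∫⁻ s in Ioi (2 * m), f s ≤ C * ∫⁻ s in Ioi m, g s := by
  have hcover : Ioi (2 * m) ⊆ ⋃ k : ℕ, Ico (2 * (m * 2 ^ k)) (4 * (m * 2 ^ k)) := by
    intro s hs
    obtain ⟨k, hk⟩ := exists_nat_pow_near (x := s / (2 * m))
      ((one_le_div (by positivity)).2 (le_of_lt hs)) one_lt_two
    rw [le_div_iff₀ (by positivity), div_lt_iff₀ (by positivity), pow_succ] at hk
    exact mem_iUnion.2 ⟨k, by constructor <;> nlinarith⟩
  have hdisj : Pairwise (Disjoint on fun k : ℕ => Ioc (m * 2 ^ k) (2 * (m * 2 ^ k))) := by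
    refine (pairwise_disjoint_on _).2 fun i j hij => Ioc_disjoint_Ioc_of_le ?_
    have : (2 : ℝ) ^ (i + 1) ≤ 2 ^ j := pow_le_pow_right₀ one_le_two hij
    rw [pow_succ] at this
    nlinarith
  have hunion : ⋃ k : ℕ, Ioc (m * 2 ^ k) (2 * (m * 2 ^ k)) ⊆ Ioi m :=
    iUnion_subset fun k s hs =>
      (le_mul_of_one_le_right hm.le (one_le_pow₀ one_le_two)).trans_lt hs.1
  calc ∫⁻ s in Ioi (2 * m), f s
      ≤ ∫⁻ s in ⋃ k : ℕ, Ico (2 * (m * 2 ^ k)) (4 * (m * 2 ^ k)), f s := lintegral_mono_set hcover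
    _ ≤ ∑' k : ℕ, ∫⁻ s in Ico (2 * (m * 2 ^ k)) (4 * (m * 2 ^ k)), f s := lintegral_iUnion_le _ _
    _ ≤ ∑' k : ℕ, C * ∫⁻ s in Ioc (m * 2 ^ k) (2 * (m * 2 ^ k)), g s :=
        ENNReal.tsum_le_tsum fun k =>
          h _ (le_mul_of_one_le_right hm.le (one_le_pow₀ one_le_two))
    _ = C * ∫⁻ s in ⋃ k : ℕ, Ioc (m * 2 ^ k) (2 * (m * 2 ^ k)), g s := by
        rw [ENNReal.tsum_mul_left, lintegral_iUnion (fun _ => measurableSet_Ioc) hdisj]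
    _ ≤ C * ∫⁻ s in Ioi m, g s := by gcongr

lemma not_integrableOn_inv_Ioi (hFcont : ContinuousOn F (Ioi 0)) (hFpos : ∀ t, 0 < t → 0 < F t)
    (hFint : IntegrableOn F (Ioo 0 1))
    (hpara : ∫⁻ t in Ioi (1 : ℝ), ENNReal.ofReal (t / ∫ s in Ioo (0 : ℝ) t, F s) = ⊤)
    {b : ℝ} (hb : 0 < b) : ¬ IntegrableOn (fun s => (F s)⁻¹) (Ioi b) := by
  intro hint
  set m := max b 1
  have hm : 1 ≤ m := le_max_right b 1
  set f : ℝ → ℝ≥0∞ := fun t => ENNReal.ofReal (t / ∫ s in (0 : ℝ)..t, F s)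
  have hpara' : ∫⁻ t in Ioi (1 : ℝ), f t = ⊤ := by
    rw [← hpara]
    refine setLIntegral_congr_fun measurableSet_Ioi fun t ht => ?_
    simp only [f]
    rw [intervalIntegral.integral_of_le (zero_le_one.trans ht.le), integral_Ioc_eq_integral_Ioo]
  have hhead : ∫⁻ t in Ioc 1 (2 * m), f t < ⊤ := by
    have hA1 := integral_zero_left_pos hFcont hFpos hFint one_pos
    refine (setLIntegral_mono (g := fun _ => ENNReal.ofReal (2 * m / ∫ s in (0 : ℝ)..1, F s))
      measurable_const fun t ht => ENNReal.ofReal_le_ofReal ?_).trans_lt ?_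
    · exact div_le_div₀ (by linarith [ht.1]) ht.2 hA1
        (integral_le_integral_zero_left hFcont hFpos hFint le_rfl zero_le_one ht.1.le
          (by linarith [ht.1]))
    · rw [setLIntegral_const, Real.volume_Ioc]
      exact ENNReal.mul_lt_top ENNReal.ofReal_lt_top ENNReal.ofReal_lt_top
  have htail : ∫⁻ t in Ioi (2 * m), f t < ⊤ := by
    refine (lintegral_Ioi_le_mul_of_dyadic (by positivity) 8
      fun u hu => lintegral_Ico_div_le hFcont hFpos hFint (by linarith)).trans_lt ?_
    refine ENNReal.mul_lt_top (by norm_num) ?_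
    exact (lintegral_mono_set (Ioi_subset_Ioi (le_max_left b 1))).trans_lt hint.lintegral_lt_top
  rw [← Ioc_union_Ioi_eq_Ioi (by linarith : (1 : ℝ) ≤ 2 * m),
    lintegral_union measurableSet_Ioi (Ioc_disjoint_Ioi le_rfl)] at hpara'
  exact (ENNReal.add_lt_top.2 ⟨hhead, htail⟩).ne hpara'

lemma tendsto_resistance_atTop (hFcont : ContinuousOn F (Ioi 0))
    (hFpos : ∀ t, 0 < t → 0 < F t) (hFint : IntegrableOn F (Ioo 0 1))
    (hpara : ∫⁻ t in Ioi (1 : ℝ), ENNReal.ofReal (t / ∫ s in Ioo (0 : ℝ) t, F s) = ⊤)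
    {b : ℝ} (hb : 0 < b) : Tendsto (resistance F b) atTop atTop := by
  have hmono : MonotoneOn (resistance F b) (Ici b) := fun c hc d hd hcd =>
    intervalIntegral.integral_mono_interval le_rfl hc hcd
      (by filter_upwards [ae_restrict_mem measurableSet_Ioc] with s hs
          exact (inv_pos.2 (hFpos s (hb.trans hs.1))).le)
      (intervalIntegrable_inv hFcont hFpos hb (hb.trans_le hd))
  refine tendsto_atTop_atTop.2 fun C => ?_
  obtain ⟨T, hbT, hCT⟩ : ∃ T, b ≤ T ∧ C ≤ resistance F b T := by
    by_contra! hC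
    refine not_integrableOn_inv_Ioi hFcont hFpos hFint hpara hb ?_
    refine integrableOn_Ioi_of_intervalIntegral_norm_bounded C b
      (b := fun n : ℕ => b + n)
      (fun n => (intervalIntegrable_inv hFcont hFpos hb (by positivity)).1)
      (tendsto_atTop_add_const_left _ b tendsto_natCast_atTop_atTop)
      (Eventually.of_forall fun n => ?_)
    have hbn : b ≤ b + n := le_add_of_nonneg_right n.cast_nonneg
    refine le_of_eq_of_le (intervalIntegral.integral_congr fun s hs => ?_) (hC _ hbn).le
    rw [uIcc_of_le hbn] at hs
    exact Real.norm_of_nonneg (inv_pos.2 (hFpos s (hb.trans_le hs.1))).le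
  exact ⟨T, fun d hd => hCT.trans (hmono hbT (hbT.trans hd) hd)⟩

end Weight

/-- The equilibrium potential of the condenser `(a, b)` for the weight `F`: it solves
`(F ψ')' = 0` on `(a, b)`, vanishes left of `a` and equals `1` right of `b`. -/
noncomputable def capacityPotential (F : ℝ → ℝ) (a b t : ℝ) : ℝ :=
  (∫ s in a..t, (Ioc a b).indicator (fun s => (F s)⁻¹) s) / resistance F a b

section CapacityPotential

variable {F : ℝ → ℝ} {a b t : ℝ}

lemma capacityPotential_eq_zero_of_le (ht : t ≤ a) : capacityPotential F a b t = 0 := by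
  rw [capacityPotential, intervalIntegral.integral_of_ge ht,
    setIntegral_indicator measurableSet_Ioc, Ioc_inter_Ioc, max_eq_right ht,
    Ioc_eq_empty (not_lt.2 (min_le_left a b))]
  simp

lemma capacityPotential_eq_integral_min_div (hab : a ≤ b) (ht : a ≤ t) :
    capacityPotential F a b t = (∫ s in a..min t b, (F s)⁻¹) / resistance F a b := by
  rw [capacityPotential, intervalIntegral.integral_of_le ht,
    setIntegral_indicator measurableSet_Ioc, Ioc_inter_Ioc, max_self,
    intervalIntegral.integral_of_le (le_min ht hab)]

lemma capacityPotential_eq_one_of_ge (hFcont : ContinuousOn F (Ioi 0))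
    (hFpos : ∀ t, 0 < t → 0 < F t)
    (ha : 0 < a) (hab : a < b) (ht : b ≤ t) : capacityPotential F a b t = 1 := by
  rw [capacityPotential_eq_integral_min_div hab.le (hab.le.trans ht), min_eq_right ht]
  exact div_self (resistance_pos hFcont hFpos ha hab).ne'

lemma capacityPotential_mem_Icc (hFcont : ContinuousOn F (Ioi 0))
    (hFpos : ∀ t, 0 < t → 0 < F t) (ha : 0 < a) (hab : a < b) (t : ℝ) :
    capacityPotential F a b t ∈ Icc 0 1 := by
  rcases le_total t a with hta | hat
  · simp [capacityPotential_eq_zero_of_le hta]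
  have hR := resistance_pos hFcont hFpos ha hab
  have hnonneg : 0 ≤ᵐ[volume.restrict (Ioc a b)] fun s => (F s)⁻¹ := by
    filter_upwards [ae_restrict_mem measurableSet_Ioc] with s hs
    exact (inv_pos.2 (hFpos s (ha.trans hs.1))).le
  rw [capacityPotential_eq_integral_min_div hab.le hat, mem_Icc, div_le_one hR]
  refine ⟨div_nonneg (intervalIntegral.integral_nonneg (le_min hat hab.le) fun s hs =>
    (inv_pos.2 (hFpos s (ha.trans_le hs.1))).le) hR.le, ?_⟩
  exact intervalIntegral.integral_mono_interval le_rfl (le_min hat hab.le) (min_le_right t b)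
    hnonneg (intervalIntegrable_inv hFcont hFpos ha (ha.trans hab))

lemma integrable_indicator_inv (hFcont : ContinuousOn F (Ioi 0))
    (hFpos : ∀ t, 0 < t → 0 < F t) (ha : 0 < a) (hab : a < b) :
    Integrable ((Ioc a b).indicator fun s => (F s)⁻¹) :=
  (integrable_indicator_iff measurableSet_Ioc).2
    (intervalIntegrable_inv hFcont hFpos ha (ha.trans hab)).1

lemma exists_lipschitzWith_capacityPotential (hFcont : ContinuousOn F (Ioi 0))
    (hFpos : ∀ t, 0 < t → 0 < F t) (ha : 0 < a) (hab : a < b) :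
    ∃ K, LipschitzWith K (capacityPotential F a b) := by
  set g := (Ioc a b).indicator fun s => (F s)⁻¹
  have hR := resistance_pos hFcont hFpos ha hab
  obtain ⟨M, hM⟩ := isCompact_Icc.exists_bound_of_continuousOn
    ((hFcont.inv₀ fun t ht => (hFpos t ht).ne').mono fun s (hs : s ∈ Icc a b) => ha.trans_le hs.1)
  have hg : ∀ s, ‖g s‖ ≤ max M 0 := by
    intro s
    by_cases hs : s ∈ Ioc a b
    · simpa [g, hs] using (hM s (Ioc_subset_Icc_self hs)).trans (le_max_left M 0)
    · simp [g, hs]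
  have hgi : ∀ x y, IntervalIntegrable g volume x y := fun x y =>
    (integrable_indicator_inv hFcont hFpos ha hab).intervalIntegrable
  refine ⟨_, LipschitzWith.of_dist_le' (K := max M 0 / resistance F a b) fun x y => ?_⟩
  rw [Real.dist_eq, Real.dist_eq, capacityPotential, capacityPotential, ← sub_div,
    intervalIntegral.integral_interval_sub_left (hgi _ _) (hgi _ _), abs_div, abs_of_pos hR,
    div_mul_eq_mul_div, div_le_div_iff_of_pos_right hR]
  exact intervalIntegral.norm_integral_le_of_norm_le_const fun s _ => hg s

lemma ae_hasDerivAt_capacityPotential (hFcont : ContinuousOn F (Ioi 0))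
    (hFpos : ∀ t, 0 < t → 0 < F t) (ha : 0 < a) (hab : a < b) :
    ∀ᵐ t, HasDerivAt (capacityPotential F a b)
      ((Ioc a b).indicator (fun s => (F s)⁻¹) t / resistance F a b) t := by
  filter_upwards [LocallyIntegrable.ae_hasDerivAt_integral
    (integrable_indicator_inv hFcont hFpos ha hab).locallyIntegrable] with t ht
  exact (ht a).div_const _

end CapacityPotential

noncomputable def tent (F : ℝ → ℝ) (a b c t : ℝ) : ℝ :=
  capacityPotential F a b t - capacityPotential F b c t

section Tent

variable {F : ℝ → ℝ} {a b c : ℝ}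

lemma tent_nonneg (hFcont : ContinuousOn F (Ioi 0)) (hFpos : ∀ t, 0 < t → 0 < F t)
    (ha : 0 < a) (hab : a < b) (hbc : b < c) (t : ℝ) : 0 ≤ tent F a b c t := by
  rw [tent, sub_nonneg]
  rcases le_total t b with htb | hbt
  · rw [capacityPotential_eq_zero_of_le htb]
    exact (capacityPotential_mem_Icc hFcont hFpos ha hab t).1
  · rw [capacityPotential_eq_one_of_ge hFcont hFpos ha hab hbt]
    exact (capacityPotential_mem_Icc hFcont hFpos (ha.trans hab) hbc t).2

lemma tent_eq_zero_of_ge (hFcont : ContinuousOn F (Ioi 0)) (hFpos : ∀ t, 0 < t → 0 < F t)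
    (ha : 0 < a) (hab : a < b) (hbc : b < c) {t : ℝ} (ht : c ≤ t) : tent F a b c t = 0 := by
  rw [tent, capacityPotential_eq_one_of_ge hFcont hFpos ha hab (hbc.le.trans ht),
    capacityPotential_eq_one_of_ge hFcont hFpos (ha.trans hab) hbc ht, sub_self]

lemma exists_lipschitzWith_tent (hFcont : ContinuousOn F (Ioi 0))
    (hFpos : ∀ t, 0 < t → 0 < F t) (ha : 0 < a) (hab : a < b) (hbc : b < c) :
    ∃ K, LipschitzWith K (tent F a b c) := by
  obtain ⟨K₁, h₁⟩ := exists_lipschitzWith_capacityPotential hFcont hFpos ha hab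
  obtain ⟨K₂, h₂⟩ := exists_lipschitzWith_capacityPotential hFcont hFpos (ha.trans hab) hbc
  exact ⟨K₁ + K₂, h₁.sub h₂⟩

lemma ae_hasDerivAt_tent (hFcont : ContinuousOn F (Ioi 0))
    (hFpos : ∀ t, 0 < t → 0 < F t) (ha : 0 < a) (hab : a < b) (hbc : b < c) :
    ∀ᵐ t, HasDerivAt (tent F a b c)
      ((Ioc a b).indicator (fun s => (F s)⁻¹) t / resistance F a b
        - (Ioc b c).indicator (fun s => (F s)⁻¹) t / resistance F b c) t := by
  filter_upwards [ae_hasDerivAt_capacityPotential hFcont hFpos ha hab,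
    ae_hasDerivAt_capacityPotential hFcont hFpos (ha.trans hab) hbc] with t h₁ h₂
  exact h₁.sub h₂

end Tent

lemma absolutelyContinuousOnInterval_of_lipschitzOnWith_Icc {φ : ℝ → ℝ}
    (hφlip : ∀ a b : ℝ, 0 < a → ∃ K, LipschitzOnWith K φ (Icc a b)) {a b : ℝ}
    (ha : 0 < a) (hab : a ≤ b) : AbsolutelyContinuousOnInterval φ a b := by
  obtain ⟨K, hK⟩ := hφlip a b ha
  rw [← uIcc_of_le hab] at hK
  exact hK.absolutelyContinuousOnInterval

lemma integral_deriv_mul_deriv_tent {F φ : ℝ → ℝ} (hFcont : ContinuousOn F (Ioi 0))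
    (hFpos : ∀ t, 0 < t → 0 < F t)
    (hφlip : ∀ a b : ℝ, 0 < a → ∃ K, LipschitzOnWith K φ (Icc a b)) {δ a b c : ℝ}
    (hδ : 0 < δ) (ha : 0 < a) (hab : a < b) (hbc : b < c) (hδb : δ ≤ b) :
    ∫ t in Ioi δ, deriv φ t * deriv (tent F a b c) t * F t
      = (φ b - φ (max a δ)) / resistance F a b - (φ c - φ b) / resistance F b c := by
  have hac {u v : ℝ} (hu : 0 < u) (huv : u ≤ v) :=
    absolutelyContinuousOnInterval_of_lipschitzOnWith_Icc hφlip hu huv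
  have hint {u v : ℝ} (hu : 0 < u) (huv : u ≤ v) : Integrable ((Ioc u v).indicator (deriv φ)) :=
    (integrable_indicator_iff measurableSet_Ioc).2 (hac hu huv).intervalIntegrable_deriv.1
  have hae : (fun t => deriv φ t * deriv (tent F a b c) t * F t) =ᵐ[volume.restrict (Ioi δ)]
      fun t => (Ioc a b).indicator (deriv φ) t / resistance F a b
        - (Ioc b c).indicator (deriv φ) t / resistance F b c := by
    filter_upwards [ae_restrict_mem measurableSet_Ioi,
      ae_restrict_of_ae (ae_hasDerivAt_tent hFcont hFpos ha hab hbc)] with t ht hderiv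
    have hFt := (hFpos t (hδ.trans ht)).ne'
    rw [hderiv.deriv]
    simp only [indicator_apply]
    split_ifs <;> field_simp <;> ring
  have hδa : max a δ ≤ b := max_le hab.le hδb
  rw [integral_congr_ae hae, integral_sub ((hint ha hab.le).integrableOn.div_const _)
      ((hint (ha.trans hab) hbc.le).integrableOn.div_const _), integral_div, integral_div,
    setIntegral_indicator measurableSet_Ioc, setIntegral_indicator measurableSet_Ioc,
    inter_comm, Ioc_inter_Ioi, inter_comm, Ioc_inter_Ioi, max_eq_left hδb,
    ← intervalIntegral.integral_of_le hδa, ← intervalIntegral.integral_of_le hbc.le,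
    (hac (ha.trans_le (le_max_left a δ)) hδa).integral_deriv_eq_sub,
    (hac (ha.trans hab) hbc.le).integral_deriv_eq_sub]

/-- Test functions need not vanish at `δ`, so besides `(F φ')' ≤ 0` this also encodes the
boundary sign condition `F φ' ≤ 0` at every `δ`. -/
def IsWeaklySuperharmonic (F φ : ℝ → ℝ) : Prop :=
  ∀ δ : ℝ, 0 < δ → ∀ ψ : ℝ → ℝ, (∀ t, 0 ≤ ψ t) → (∃ K, LipschitzWith K ψ) →
    (∃ M : ℝ, ∀ t, M ≤ t → ψ t = 0) → 0 ≤ ∫ t in Ioi δ, deriv φ t * deriv ψ t * F t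

namespace IsWeaklySuperharmonic

variable {F φ : ℝ → ℝ}

lemma sub_div_resistance_le (hsuper : IsWeaklySuperharmonic F φ)
    (hFcont : ContinuousOn F (Ioi 0)) (hFpos : ∀ t, 0 < t → 0 < F t)
    (hφlip : ∀ a b : ℝ, 0 < a → ∃ K, LipschitzOnWith K φ (Icc a b)) {δ a b c : ℝ}
    (hδ : 0 < δ) (ha : 0 < a) (hab : a < b) (hbc : b < c) (hδb : δ ≤ b) :
    (φ c - φ b) / resistance F b c ≤ (φ b - φ (max a δ)) / resistance F a b := by
  have h := hsuper δ hδ (tent F a b c) (tent_nonneg hFcont hFpos ha hab hbc)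
    (exists_lipschitzWith_tent hFcont hFpos ha hab hbc)
    ⟨c, fun t => tent_eq_zero_of_ge hFcont hFpos ha hab hbc⟩
  rw [integral_deriv_mul_deriv_tent hFcont hFpos hφlip hδ ha hab hbc hδb] at h
  linarith

lemma antitoneOn (hsuper : IsWeaklySuperharmonic F φ)
    (hFcont : ContinuousOn F (Ioi 0)) (hFpos : ∀ t, 0 < t → 0 < F t)
    (hφlip : ∀ a b : ℝ, 0 < a → ∃ K, LipschitzOnWith K φ (Icc a b)) :
    AntitoneOn φ (Ioi 0) := by
  intro b hb c _ hbc
  rcases hbc.eq_or_lt with rfl | hbc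
  · rfl
  have h := hsuper.sub_div_resistance_le hFcont hFpos hφlip hb (half_pos hb) (half_lt_self hb)
    hbc le_rfl
  rw [max_eq_right (half_lt_self hb).le, sub_self, zero_div,
    div_le_iff₀ (resistance_pos hFcont hFpos hb hbc), zero_mul] at h
  linarith

lemma monotoneOn_of_parabolic (hsuper : IsWeaklySuperharmonic F φ)
    (hFcont : ContinuousOn F (Ioi 0)) (hFpos : ∀ t, 0 < t → 0 < F t)
    (hFint : IntegrableOn F (Ioo 0 1))
    (hpara : ∫⁻ t in Ioi (1 : ℝ), ENNReal.ofReal (t / ∫ s in Ioo (0 : ℝ) t, F s) = ⊤)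
    (hφpos : ∀ t : ℝ, 0 < t → 0 < φ t)
    (hφlip : ∀ a b : ℝ, 0 < a → ∃ K, LipschitzOnWith K φ (Icc a b)) :
    MonotoneOn φ (Ioi 0) := by
  intro a ha b _ hab
  rcases hab.eq_or_lt with rfl | hab
  · rfl
  have hb : (0 : ℝ) < b := ha.trans hab
  have hbound : ∀ c, b < c → -φ b / resistance F b c ≤ (φ b - φ a) / resistance F a b := by
    intro c hbc
    have h := hsuper.sub_div_resistance_le hFcont hFpos hφlip ha ha hab hbc hab.le
    rw [max_self] at h
    refine le_trans ?_ h
    gcongr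
    · exact (resistance_pos hFcont hFpos hb hbc).le
    · linarith [hφpos c (hb.trans hbc)]
  have hlim : Tendsto (fun c => -φ b / resistance F b c) atTop (𝓝 0) :=
    tendsto_const_nhds.div_atTop (tendsto_resistance_atTop hFcont hFpos hFint hpara hb)
  have h := le_of_tendsto hlim ((eventually_gt_atTop b).mono hbound)
  rw [le_div_iff₀ (resistance_pos hFcont hFpos ha hab), zero_mul] at h
  linarith

end IsWeaklySuperharmonic

/-- **Weighted half-lines with slow volume growth carry no nonconstant weakly
superharmonic functions.**
Let `F : (0,∞) → (0,∞)` be continuous and integrable near `0`, let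
`A t = ∫₀ᵗ F` and assume the parabolicity condition `∫₁^∞ t / A(t) dt = +∞`.
Let `φ : (0,∞) → (0,∞)` be locally Lipschitz and weakly superharmonic with respect
to the weight `F`, in the sense that `∫_δ^∞ φ' ψ' F ≥ 0` for every `δ > 0` and every
nonnegative Lipschitz `ψ` on `[δ,∞)` vanishing outside a bounded set (derivatives
exist a.e. and are encoded by `deriv`).  Then `φ` is constant on `(0,∞)`. -/
theorem constant_of_superharmonic_parabolic (F : ℝ → ℝ)
    (hFcont : ContinuousOn F (Ioi 0))
    (hFpos : ∀ t : ℝ, 0 < t → 0 < F t)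
    (hFint : IntegrableOn F (Ioo 0 1))
    (hpara : ∫⁻ t in Ioi (1 : ℝ),
        ENNReal.ofReal (t / ∫ s in Ioo (0 : ℝ) t, F s) = ⊤)
    (φ : ℝ → ℝ)
    (hφpos : ∀ t : ℝ, 0 < t → 0 < φ t)
    (hφlip : ∀ a b : ℝ, 0 < a → ∃ K, LipschitzOnWith K φ (Icc a b))
    (hsuper : ∀ δ : ℝ, 0 < δ → ∀ ψ : ℝ → ℝ, (∀ t, 0 ≤ ψ t) →
      (∃ K, LipschitzWith K ψ) → (∃ M : ℝ, ∀ t, M ≤ t → ψ t = 0) →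
      0 ≤ ∫ t in Ioi δ, deriv φ t * deriv ψ t * F t) :
    ∀ s t : ℝ, 0 < s → 0 < t → φ s = φ t := by
  have hsuper : IsWeaklySuperharmonic F φ := hsuper
  have hanti := hsuper.antitoneOn hFcont hFpos hφlip
  have hmono := hsuper.monotoneOn_of_parabolic hFcont hFpos hFint hpara hφpos hφlip
  intro s t hs ht
  rcases le_total s t with hst | hts
  · exact le_antisymm (hmono hs ht hst) (hanti hs ht hst)
  · exact le_antisymm (hanti ht hs hts) (hmono ht hs hts)
end

section
/- For all natural numbers m and r there exists a natural number N = N(m, r) such that the following holds: if H is a group generated by a finite subset S with |S| ≤ m, such that S is closed under conjugation (h s h⁻¹ ∈ S for every h ∈ H and s ∈ S) and every element of S has order at most r, then H is finite with |H| ≤ N. -/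
/-!
The centre of `H` is the intersection of the centralizers of the elements of `S`; since
conjugacy classes of elements of `S` stay inside `S`, each centralizer has index at most `|S|`,
so `[H : Z(H)] ≤ |S| ^ |S|`. A commutator only depends on its entries modulo the centre, so `H`
has at most `[H : Z(H)] ^ 2` commutators, and Schur's theorem bounds `|[H, H]|` in terms of
`[H : Z(H)]`. Finally the abelianization is generated by the images of `S`, all killed by `r !`,
so it has at most `r ! ^ |S|` elements.
-/

open Subgroup MulAction
open scoped Nat commutatorElement

section

variable {G : Type*} [Group G]

namespace Subgroup

theorem index_centralizer_singleton (g : G) :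
    (centralizer {g}).index = (orbit (ConjAct G) g).ncard :=
  (Nat.card_congr ((orbitEquivQuotientStabilizer (ConjAct G) g).trans
    (quotientEquivOfEq (ConjAct.stabilizer_eq_centralizer g)))).symm.trans
    (Nat.card_coe_set_eq _)

theorem orbit_conjAct_subset {S : Set G} (hS : ∀ g, ∀ s ∈ S, g * s * g⁻¹ ∈ S) {s : G}
    (hs : s ∈ S) : orbit (ConjAct G) s ⊆ S := by
  rintro _ ⟨c, rfl⟩
  simpa [ConjAct.smul_def] using hS (ConjAct.ofConjAct c) s hs

theorem index_centralizer_singleton_le {S : Set G} (hfin : S.Finite)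
    (hS : ∀ g, ∀ s ∈ S, g * s * g⁻¹ ∈ S) {s : G} (hs : s ∈ S) :
    (centralizer {s}).index ≤ S.ncard := by
  rw [index_centralizer_singleton]
  exact Set.ncard_le_ncard (orbit_conjAct_subset hS hs) hfin

theorem index_centralizer_singleton_ne_zero {S : Set G} (hfin : S.Finite)
    (hS : ∀ g, ∀ s ∈ S, g * s * g⁻¹ ∈ S) {s : G} (hs : s ∈ S) :
    (centralizer {s}).index ≠ 0 := by
  rw [index_centralizer_singleton]
  exact ((Set.ncard_pos (hfin.subset (orbit_conjAct_subset hS hs))).mpr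
    ⟨s, mem_orbit_self s⟩).ne'

theorem finiteIndex_center_of_closure_eq_top {S : Finset G} (hgen : closure (S : Set G) = ⊤)
    (hS : ∀ g, ∀ s ∈ S, g * s * g⁻¹ ∈ S) : (center G).FiniteIndex := by
  rw [center_eq_infi' hgen]
  exact ⟨index_iInf_ne_zero fun s => index_centralizer_singleton_ne_zero S.finite_toSet hS s.2⟩

theorem index_center_le_card_pow_card {S : Finset G} (hgen : closure (S : Set G) = ⊤)
    (hS : ∀ g, ∀ s ∈ S, g * s * g⁻¹ ∈ S) : (center G).index ≤ S.card ^ S.card := by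
  rw [center_eq_infi' hgen]
  calc (⨅ s : (S : Set G), centralizer {(s : G)}).index
      ≤ ∏ s : (S : Set G), (centralizer {(s : G)}).index := index_iInf_le _
    _ ≤ ∏ _s : (S : Set G), S.card := Finset.prod_le_prod' fun s _ => by
        simpa using index_centralizer_singleton_le S.finite_toSet hS s.2
    _ = S.card ^ S.card := by simp

theorem commutatorElement_mul_mem_center {z w : G} (hz : z ∈ center G) (hw : w ∈ center G)
    (g h : G) : ⁅g * z, h * w⁆ = ⁅g, h⁆ := by
  have hz' (x : G) : ⁅z, x⁆ = 1 :=
    commutatorElement_eq_one_iff_mul_comm.mpr (mem_center_iff.mp hz x).symm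
  have hw' (x : G) : ⁅x, w⁆ = 1 :=
    commutatorElement_eq_one_iff_mul_comm.mpr (mem_center_iff.mp hw x)
  simp [commutatorElement_mul_left_eq_conj_mul, commutatorElement_mul_right_eq_mul_conj, hz', hw']

theorem commutatorSet_subset_range_out :
    commutatorSet G ⊆
      Set.range fun p : (G ⧸ center G) × (G ⧸ center G) => ⁅p.1.out, p.2.out⁆ := by
  rintro _ ⟨g, h, rfl⟩
  refine ⟨((g : G ⧸ center G), (h : G ⧸ center G)), ?_⟩
  obtain ⟨z, hz, hgz⟩ : ∃ z ∈ center G, (g : G ⧸ center G).out = g * z :=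
    ⟨g⁻¹ * (g : G ⧸ center G).out, QuotientGroup.eq.mp (QuotientGroup.out_eq' _).symm,
      by group⟩
  obtain ⟨w, hw, hhw⟩ : ∃ w ∈ center G, (h : G ⧸ center G).out = h * w :=
    ⟨h⁻¹ * (h : G ⧸ center G).out, QuotientGroup.eq.mp (QuotientGroup.out_eq' _).symm,
      by group⟩
  simp only [hgz, hhw, commutatorElement_mul_mem_center hz hw]

instance finite_commutatorSet_of_finiteIndex_center [(center G).FiniteIndex] :
    Finite (commutatorSet G) :=
  ((Set.finite_range _).subset commutatorSet_subset_range_out).to_subtype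

theorem card_commutatorSet_le_index_center_sq [(center G).FiniteIndex] :
    Nat.card (commutatorSet G) ≤ (center G).index ^ 2 :=
  calc Nat.card (commutatorSet G)
      ≤ Nat.card (Set.range fun p : (G ⧸ center G) × (G ⧸ center G) => ⁅p.1.out, p.2.out⁆) :=
        Nat.card_mono (Set.finite_range _) commutatorSet_subset_range_out
    _ ≤ Nat.card ((G ⧸ center G) × (G ⧸ center G)) := Finite.card_range_le _
    _ = (center G).index ^ 2 := by rw [Nat.card_prod, sq, index]

theorem card_commutator_le_index_center_pow [(center G).FiniteIndex] :
    Nat.card (_root_.commutator G) ≤ (center G).index ^ ((center G).index ^ 3 + 1) := by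
  have hI : 0 < (center G).index := Nat.pos_of_ne_zero FiniteIndex.index_ne_zero
  refine Nat.le_of_dvd (by positivity) ((card_commutator_dvd_index_center_pow G).trans ?_)
  refine pow_dvd_pow _ (Nat.add_le_add_right ?_ 1)
  calc (center G).index * Nat.card (commutatorSet G)
      ≤ (center G).index * (center G).index ^ 2 :=
        Nat.mul_le_mul_left _ card_commutatorSet_le_index_center_sq
    _ = (center G).index ^ 3 := by ring

end Subgroup

theorem CommGroup.card_dvd_pow_card_of_closure_eq_top {A : Type*} [CommGroup A] {S : Finset A}
    (hgen : closure (S : Set A) = ⊤) {n : ℕ} (hS : ∀ s ∈ S, s ^ n = 1) :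
    Nat.card A ∣ n ^ S.card := by
  have : Group.FG A := Group.fg_iff'.mpr ⟨_, S, rfl, hgen⟩
  have hexp (a : A) : a ^ n = 1 := by
    have : closure (S : Set A) ≤ (powMonoidHom n : A →* A).ker := (closure_le _).mpr hS
    exact this (hgen ▸ mem_top a)
  exact (card_dvd_exponent_pow_rank' A hexp).trans (pow_dvd_pow n (Group.rank_le hgen))

theorem Abelianization.card_dvd_pow_card_of_closure_eq_top {S : Finset G}
    (hgen : closure (S : Set G) = ⊤) {n : ℕ} (hS : ∀ s ∈ S, s ^ n = 1) :
    Nat.card (Abelianization G) ∣ n ^ S.card := by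
  classical
  have hgen' : closure ((S.image Abelianization.of : Finset _) : Set (Abelianization G)) = ⊤ := by
    rw [Finset.coe_image, ← MonoidHom.map_closure, hgen, ← MonoidHom.range_eq_map,
      MonoidHom.range_eq_top]
    exact QuotientGroup.mk_surjective
  refine (CommGroup.card_dvd_pow_card_of_closure_eq_top hgen' ?_).trans
    (pow_dvd_pow n Finset.card_image_le)
  simpa [← map_pow] using fun s hs => congrArg Abelianization.of (hS s hs)

end

/-- **Uniform finiteness of groups generated by a bounded conjugation-invariant set
of elements of bounded order.**
For all `m, r : ℕ` there is `N = N(m, r)` such that any group `H` generated by a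
finite subset `S` with `|S| ≤ m` which is closed under conjugation and consists of
elements of (finite) order at most `r` is finite of cardinality at most `N`. -/
theorem exists_card_bound_of_conjInvariant_generators (m r : ℕ) :
    ∃ N : ℕ, ∀ (H : Type*) [Group H] (S : Finset H),
      S.card ≤ m →
      Subgroup.closure (S : Set H) = ⊤ →
      (∀ h : H, ∀ s ∈ S, h * s * h⁻¹ ∈ S) →
      (∀ s ∈ S, 0 < orderOf s ∧ orderOf s ≤ r) →
      Finite H ∧ Nat.card H ≤ N := by
  refine ⟨r ! ^ m * (m ^ m) ^ ((m ^ m) ^ 3 + 1), fun H _ S hcard hgen hconj hord => ?_⟩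
  have := finiteIndex_center_of_closure_eq_top hgen hconj
  have hpow (s : H) (hs : s ∈ S) : s ^ r ! = 1 :=
    orderOf_dvd_iff_pow_eq_one.mp (Nat.dvd_factorial (hord s hs).1 (hord s hs).2)
  have hab : Nat.card (Abelianization H) ∣ r ! ^ m :=
    (Abelianization.card_dvd_pow_card_of_closure_eq_top hgen hpow).trans (pow_dvd_pow _ hcard)
  have hab_pos : 0 < Nat.card (Abelianization H) := Nat.pos_of_dvd_of_pos hab (by positivity)
  have hI : (center H).index ≤ m ^ m :=
    (index_center_le_card_pow_card hgen hconj).trans (Nat.pow_self_mono hcard)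
  have hcomm : Nat.card (commutator H) ≤ (m ^ m) ^ ((m ^ m) ^ 3 + 1) := by
    refine card_commutator_le_index_center_pow.trans ?_
    have hI_pos : 1 ≤ (center H).index := Nat.one_le_iff_ne_zero.mpr FiniteIndex.index_ne_zero
    gcongr
    exact hI_pos.trans hI
  have hcard_eq : Nat.card H = Nat.card (Abelianization H) * Nat.card (commutator H) :=
    card_eq_card_quotient_mul_card_subgroup _
  refine ⟨Nat.finite_of_card_ne_zero ?_, ?_⟩
  · rw [hcard_eq]
    exact mul_ne_zero hab_pos.ne' Nat.card_pos.ne'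
  · rw [hcard_eq]
    exact Nat.mul_le_mul (Nat.le_of_dvd (by positivity) hab) hcomm
end

section
/- Let (X, dist) be a metric space, μ a Borel measure on X, and T : X → X a bijective isometry that preserves μ (the pushforward of μ under T equals μ). Let p ∈ X satisfy dist(p, T p) ≤ 1, and let F ⊆ X be a Borel set such that μ(Tⁱ(F) ∩ F) = 0 for every integer i ≥ 1, where Tⁱ denotes the i-th iterate of T. Then for every real number t ≥ 2: μ(B_t(p)) ≥ ⌊t/2⌋ · μ(F ∩ B_{t/2}(p)), where B_r(p) denotes the open ball of radius r around p. -/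
/-!
The translates `Tⁱ(F ∩ B_{t/2}(p))`, `0 ≤ i < ⌊t/2⌋`, all have the measure of `F ∩ B_{t/2}(p)`,
are pairwise almost disjoint because `μ(Tⁱ⁺ᵏ F ∩ Tⁱ F) = μ(Tᵏ F ∩ F) = 0`, and lie in `B_t(p)`
because `Tⁱ` moves `p` by at most `i ≤ t/2`.
-/

open MeasureTheory Metric Set Function

namespace Isometry

variable {α : Type*} [PseudoMetricSpace α] {T : α → α}

protected theorem iterate (hT : Isometry T) : ∀ n, Isometry T^[n]
  | 0 => isometry_id
  | n + 1 => (hT.iterate n).comp hT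

theorem dist_iterate_self_le (hT : Isometry T) (x : α) (n : ℕ) :
    dist (T^[n] x) x ≤ n * dist x (T x) := by
  have hstep : ∀ i, dist (T^[i] x) (T^[i + 1] x) = dist x (T x) := fun i => by
    rw [iterate_succ_apply, (hT.iterate i).dist_eq]
  simpa only [hstep, Finset.sum_const, Finset.card_range, nsmul_eq_mul, iterate_zero_apply,
    dist_comm x] using dist_le_range_sum_dist (fun i => T^[i] x) n

theorem mapsTo_iterate_ball (hT : Isometry T) (x : α) (r : ℝ) (n : ℕ) :
    MapsTo T^[n] (ball x r) (ball x (r + n * dist x (T x))) := fun y hy =>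
  calc dist (T^[n] y) x ≤ dist (T^[n] y) (T^[n] x) + dist (T^[n] x) x := dist_triangle _ _ _
    _ < r + n * dist x (T x) := by
      rw [(hT.iterate n).dist_eq]
      exact add_lt_add_of_lt_of_le hy (hT.dist_iterate_self_le x n)

end Isometry

protected theorem MeasurableEmbedding.iterate {α : Type*} [MeasurableSpace α] {f : α → α}
    (hf : MeasurableEmbedding f) : ∀ n, MeasurableEmbedding f^[n]
  | 0 => .id
  | n + 1 => (hf.iterate n).comp hf

namespace MeasureTheory.MeasurePreserving

variable {α : Type*} [MeasurableSpace α] {μ : Measure α} {e : α ≃ᵐ α}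

theorem measure_image_iterate (he : MeasurePreserving e μ μ) (n : ℕ) (s : Set α) :
    μ (e^[n] '' s) = μ s := by
  rw [image_eq_preimage_of_inverse (LeftInverse.iterate e.symm_apply_apply n)
    (RightInverse.iterate e.apply_symm_apply n)]
  exact ((he.symm e).iterate n).measure_preimage_emb (e.symm.measurableEmbedding.iterate n) s

theorem pairwise_aedisjoint_image_iterate (he : MeasurePreserving e μ μ) {F A : Set α}
    (hdisj : ∀ k : ℕ, 1 ≤ k → μ (e^[k] '' F ∩ F) = 0) (hA : A ⊆ F) :
    Pairwise (AEDisjoint μ on fun i => e^[i] '' A) := by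
  refine (Std.Symm.pairwise_on _).mpr fun i j hij => ?_
  obtain ⟨k, rfl⟩ := Nat.exists_eq_add_of_lt hij
  have hinj : Injective e^[i] := e.injective.iterate i
  show μ (e^[i] '' A ∩ e^[i + k + 1] '' A) = 0
  rw [add_assoc, iterate_add, image_comp, ← image_inter hinj, he.measure_image_iterate]
  refine measure_mono_null ?_ (hdisj (k + 1) le_add_self)
  exact fun x hx => ⟨image_mono hA hx.2, hA hx.1⟩

end MeasureTheory.MeasurePreserving

/-- **Volume growth from an isometric `ℤ`-action with an essentially disjoint
fundamental set.**
Let `T` be a measure-preserving bijective isometry of a metric measure space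
`(X, dist, μ)`, let `p` be a point displaced by at most `1`, and let `F` be a Borel
set meeting each of its forward iterates `Tⁱ(F)`, `i ≥ 1`, in measure zero.  Then
for every `t ≥ 2` one has `μ(B_t(p)) ≥ ⌊t/2⌋ · μ(F ∩ B_{t/2}(p))`. -/
theorem measure_ball_ge_floor_mul_of_isometry
    {X : Type*} [MetricSpace X] [MeasurableSpace X] [BorelSpace X]
    (μ : Measure X) (T : X → X)
    (hTiso : Isometry T) (hTbij : Function.Bijective T)
    (hTμ : Measure.map T μ = μ)
    (p : X) (hp : dist p (T p) ≤ 1)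
    (F : Set X) (hF : MeasurableSet F)
    (hdisj : ∀ i : ℕ, 1 ≤ i → μ ((T^[i]) '' F ∩ F) = 0) :
    ∀ t : ℝ, 2 ≤ t →
      (⌊t / 2⌋₊ : ENNReal) * μ (F ∩ ball p (t / 2)) ≤ μ (ball p t) := by
  intro t _
  let e : X ≃ᵐ X :=
    (IsometryEquiv.mk (.ofBijective T hTbij) hTiso).toHomeomorph.toMeasurableEquiv
  have he : MeasurePreserving e μ μ := ⟨e.measurable, hTμ⟩
  set n := ⌊t / 2⌋₊
  set A := F ∩ ball p (t / 2)
  have hmeas : ∀ i, MeasurableSet (e^[i] '' A) := fun i =>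
    (e.measurableEmbedding.iterate i).measurableSet_image.mpr (hF.inter measurableSet_ball)
  have hball : ∀ i ∈ Finset.range n, T^[i] '' A ⊆ ball p t := fun i hi => by
    have hshift : (i : ℝ) * dist p (T p) ≤ t / 2 := by
      have := (Nat.lt_of_lt_floor (Finset.mem_range.mp hi)).le
      nlinarith [dist_nonneg (x := p) (y := T p)]
    calc T^[i] '' A ⊆ T^[i] '' ball p (t / 2) := image_mono inter_subset_right
      _ ⊆ ball p (t / 2 + i * dist p (T p)) := (hTiso.mapsTo_iterate_ball p _ i).image_subset
      _ ⊆ ball p t := ball_subset_ball (by linarith)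
  calc (n : ENNReal) * μ A = ∑ i ∈ Finset.range n, μ (e^[i] '' A) := by
        simp [he.measure_image_iterate]
    _ = μ (⋃ i ∈ Finset.range n, e^[i] '' A) :=
        (measure_biUnion_finset₀
          ((he.pairwise_aedisjoint_image_iterate hdisj inter_subset_left).set_pairwise _)
          fun i _ => (hmeas i).nullMeasurableSet).symm
    _ ≤ μ (ball p t) := measure_mono (iUnion₂_subset hball)
end
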